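/- For d ≥ 2 and a smooth radially symmetric function ψ on R^d \ {0} of compact support, the vector field with components ∂_i( (y^i y^k / |y|^2) ψ(y) ) (divergence over the index i) is a gradient: it equals ∂_k Ψ(y), where Ψ(y) = ψ(y) − (d−1) ∫_{|y|}^{∞} ψ(s)/s ds (with ψ(s) denoting the radial profile). -/

import Mathlib

open MeasureTheory Finset

/-- The `j`-th standard basis vector of `ℝ^d`. -/
noncomputable def stdBasis {d : ℕ} (j : Fin d) : EuclideanSpace ℝ (Fin d) :=
  EuclideanSpace.single j 1

lemma hasFDerivAt_norm_ne' {d : ℕ} (y : EuclideanSpace ℝ (Fin d)) (hy : y ≠ 0) :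
    HasFDerivAt (fun z : EuclideanSpace ℝ (Fin d) => ‖z‖) (‖y‖⁻¹ • innerSL ℝ y) y := by
  have h0 : ‖y‖ ≠ 0 := norm_ne_zero_iff.mpr hy
  have h1 : HasFDerivAt (fun z : EuclideanSpace ℝ (Fin d) => ‖z‖ ^ 2) (2 • innerSL ℝ y) y :=
    (hasStrictFDerivAt_norm_sq y).hasFDerivAt
  have h2 := h1.sqrt (by positivity)
  have h3 : (fun z : EuclideanSpace ℝ (Fin d) => Real.sqrt (‖z‖ ^ 2)) = fun z => ‖z‖ := by
    funext z; exact Real.sqrt_sq (norm_nonneg z)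
  rw [h3] at h2
  convert h2 using 1
  · rfl
  rw [Real.sqrt_sq (norm_nonneg y)]
  ext v
  simp [ContinuousLinearMap.smul_apply, smul_smul]
  ring_nf

lemma aux_int (h : ℝ → ℝ) (hc : Continuous h) (a b : ℝ)
    (hs : Function.support h ⊆ Set.Ioo a b) (r : ℝ) :
    HasDerivAt (fun t => ∫ s in Set.Ioi t, h s) (-h r) r := by
  have hcs : HasCompactSupport h := by
    apply HasCompactSupport.intro (isCompact_Icc (a := a) (b := b))
    intro x hx
    by_contra hne
    exact hx (Set.Ioo_subset_Icc_self (hs hne))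
  have hint : Integrable h := hc.integrable_of_hasCompactSupport hcs
  set c := r - 1 with hc'
  have key : ∀ t ∈ Set.Ioi c,
      (∫ s in Set.Ioi t, h s) = (∫ s in Set.Ioi c, h s) - ∫ s in c..t, h s := by
    intro t ht
    have hct : c ≤ t := le_of_lt ht
    rw [intervalIntegral.integral_of_le hct]
    have hu : Set.Ioc c t ∪ Set.Ioi t = Set.Ioi c := Set.Ioc_union_Ioi_eq_Ioi hct
    have := setIntegral_union (f := h) (μ := volume) (s := Set.Ioc c t) (t := Set.Ioi t)
      (Set.Ioc_disjoint_Ioi le_rfl) measurableSet_Ioi hint.integrableOn hint.integrableOn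
    rw [hu] at this
    rw [this]; ring
  have hd : HasDerivAt (fun t => (∫ s in Set.Ioi c, h s) - ∫ s in c..t, h s) (-h r) r := by
    have := intervalIntegral.integral_hasDerivAt_right
      (hint.intervalIntegrable : IntervalIntegrable h volume c r)
      (hc.stronglyMeasurableAtFilter _ _) hc.continuousAt
    simpa using (this.const_sub (∫ s in Set.Ioi c, h s))
  exact hd.congr_of_eventuallyEq <|
    Filter.eventuallyEq_of_mem (Ioi_mem_nhds (by simp [hc'])) key

/-- For `d ≥ 2` and a smooth radial profile `g` supported away from `0` and `∞`, the
vector field `∂_i (y^i y^k/|y|² · g(|y|))` (divergence over `i`) is the gradient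
`∂_k Ψ(y)` of the radial potential `Ψ(y) = g(|y|) − (d−1) ∫_{|y|}^∞ g(s)/s ds`. -/
theorem longitudinal_divergence_is_gradient {d : ℕ} (hd : 2 ≤ d)
    (g : ℝ → ℝ) (hg : ContDiff ℝ (⊤ : ℕ∞) g)
    (a b : ℝ) (ha : 0 < a) (hab : a < b)
    (hsupp : Function.support g ⊆ Set.Ioo a b) :
    ∀ y : EuclideanSpace ℝ (Fin d), y ≠ 0 → ∀ k : Fin d,
      (∑ i : Fin d,
        fderiv ℝ (fun z : EuclideanSpace ℝ (Fin d) =>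
          z i * z k / ‖z‖ ^ 2 * g ‖z‖) y (stdBasis i))
      = fderiv ℝ (fun z : EuclideanSpace ℝ (Fin d) =>
          g ‖z‖ - ((d : ℝ) - 1) * ∫ s in Set.Ioi ‖z‖, g s / s) y (stdBasis k) := by
  intro y hy k
  have hr0 : (0:ℝ) < ‖y‖ := norm_pos_iff.mpr hy
  have h0 : ‖y‖ ≠ 0 := ne_of_gt hr0
  set r := ‖y‖ with hrdef
  have hN : HasFDerivAt (fun z : EuclideanSpace ℝ (Fin d) => ‖z‖) (r⁻¹ • innerSL ℝ y) y :=
    hasFDerivAt_norm_ne' y hy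
  have hg' : HasDerivAt g (deriv g r) r := (hg.differentiable (by simp) r).hasDerivAt
  -- continuity and support of s ↦ g s / s
  have hh_supp : Function.support (fun s => g s / s) ⊆ Set.Ioo a b := by
    intro s hs
    apply hsupp
    intro hg0
    apply hs; simp [hg0]
  have hh_cont : Continuous (fun s => g s / s) := by
    rw [continuous_iff_continuousAt]
    intro s
    rcases eq_or_ne s 0 with rfl | hs
    · have hev : (fun s => g s / s) =ᶠ[nhds (0:ℝ)] fun _ => 0 := by
        apply Filter.eventuallyEq_of_mem (Iio_mem_nhds ha)
        intro t ht
        by_contra hne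
        exact absurd (hh_supp hne).1 (not_lt.mpr (le_of_lt ht))
      exact (continuousAt_congr hev).mpr continuousAt_const
    · exact (hg.continuous.continuousAt).div continuousAt_id hs
  have hF : HasDerivAt (fun t => ∫ s in Set.Ioi t, g s / s) (-(g r / r)) r :=
    aux_int (fun s => g s / s) hh_cont a b hh_supp r
  -- RHS
  have hΨ : HasDerivAt (fun t => g t - ((d:ℝ) - 1) * ∫ s in Set.Ioi t, g s / s)
      (deriv g r - ((d:ℝ) - 1) * (-(g r / r))) r := hg'.sub (hF.const_mul _)
  have hRHS : HasFDerivAt (fun z : EuclideanSpace ℝ (Fin d) =>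
        g ‖z‖ - ((d : ℝ) - 1) * ∫ s in Set.Ioi ‖z‖, g s / s)
      ((deriv g r - ((d:ℝ) - 1) * (-(g r / r))) • (r⁻¹ • innerSL ℝ y)) y :=
    by have := hΨ.comp_hasFDerivAt y hN; exact this
  rw [hRHS.fderiv]
  -- LHS term computation
  set v' : ℝ := (deriv g r * r ^ 2 - g r * ((2:ℕ) * r ^ 1)) / (r ^ 2) ^ 2 with hv'def
  have hterm : ∀ i : Fin d,
      fderiv ℝ (fun z : EuclideanSpace ℝ (Fin d) => z i * z k / ‖z‖ ^ 2 * g ‖z‖) y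
        (stdBasis i)
      = y i * y k * (v' * (r⁻¹ * y i))
        + g r / r ^ 2 * (y i * (if k = i then 1 else 0) + y k) := by
    intro i
    have hfun : (fun z : EuclideanSpace ℝ (Fin d) => z i * z k / ‖z‖ ^ 2 * g ‖z‖)
        = fun z : EuclideanSpace ℝ (Fin d) => z i * z k * (g ‖z‖ / ‖z‖ ^ 2) := by
      funext z; rw [div_mul_eq_mul_div, mul_div_assoc]
    rw [hfun]
    have hv : HasDerivAt (fun t : ℝ => g t / t ^ 2) v' r :=
      hg'.div (hasDerivAt_pow 2 r) (by positivity)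
    have hrad : HasFDerivAt (fun z : EuclideanSpace ℝ (Fin d) => g ‖z‖ / ‖z‖ ^ 2)
        (v' • (r⁻¹ • innerSL ℝ y)) y := by have := hv.comp_hasFDerivAt y hN; exact this
    have hci : HasFDerivAt (fun z : EuclideanSpace ℝ (Fin d) => z i)
        (EuclideanSpace.proj (𝕜 := ℝ) i) y := by
      have h := (EuclideanSpace.proj (𝕜 := ℝ) i).hasFDerivAt (x := y)
      have he : ⇑(EuclideanSpace.proj (𝕜 := ℝ) i : EuclideanSpace ℝ (Fin d) →L[ℝ] ℝ)
          = fun z : EuclideanSpace ℝ (Fin d) => z i := by funext z; rfl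
      rwa [he] at h
    have hck : HasFDerivAt (fun z : EuclideanSpace ℝ (Fin d) => z k)
        (EuclideanSpace.proj (𝕜 := ℝ) k) y := by
      have h := (EuclideanSpace.proj (𝕜 := ℝ) k).hasFDerivAt (x := y)
      have he : ⇑(EuclideanSpace.proj (𝕜 := ℝ) k : EuclideanSpace ℝ (Fin d) →L[ℝ] ℝ)
          = fun z : EuclideanSpace ℝ (Fin d) => z k := by funext z; rfl
      rwa [he] at h
    have hmul : HasFDerivAt (fun z : EuclideanSpace ℝ (Fin d) => z i * z k * (g ‖z‖ / ‖z‖ ^ 2)) _ y :=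
      (hci.mul hck).mul hrad
    rw [hmul.fderiv]
    simp only [ContinuousLinearMap.add_apply, ContinuousLinearMap.smul_apply,
      ContinuousLinearMap.coe_smul', Pi.smul_apply, smul_eq_mul, innerSL_apply_apply, stdBasis]
    rw [real_inner_comm, EuclideanSpace.inner_single_left]
    simp [EuclideanSpace.single_apply]
    exact Or.inl rfl
  -- sum over i
  rw [Finset.sum_congr rfl (fun i _ => hterm i)]
  have hsum_sq : (∑ i : Fin d, y i * y i) = r ^ 2 := by
    have h1 := real_inner_self_eq_norm_sq y
    rw [← h1, PiLp.inner_apply]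
    simp [RCLike.inner_apply, conj_trivial, sq]
  rw [Finset.sum_add_distrib]
  have e1 : (∑ i : Fin d, y i * y k * (v' * (r⁻¹ * y i)))
      = (∑ i : Fin d, y i * y i) * (y k * (v' * r⁻¹)) := by
    rw [Finset.sum_mul]
    exact Finset.sum_congr rfl (fun i _ => by ring)
  have e2 : (∑ i : Fin d, g r / r ^ 2 * (y i * (if k = i then 1 else 0) + y k))
      = g r / r ^ 2 * (y k + d * y k) := by
    rw [← Finset.mul_sum, Finset.sum_add_distrib]
    simp [Finset.sum_ite_eq, mul_comm]
  rw [e1, e2, hsum_sq]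
  simp only [ContinuousLinearMap.smul_apply, ContinuousLinearMap.coe_smul', Pi.smul_apply,
    smul_eq_mul, innerSL_apply_apply, stdBasis]
  rw [real_inner_comm, EuclideanSpace.inner_single_left]
  simp only [map_one, one_mul, conj_trivial, hv'def]
  have hd1 : (1:ℝ) ≤ (d:ℝ) := by exact_mod_cast Nat.one_le_of_lt hd
  push_cast
  field_simp
  ring
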